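/- arXiv:1206.3088 — 2 statements merged into one kernel-verified Lean document; each statement's English description precedes it below -/
import Mathlib

section
/- Let ρ be an N-qubit PPT symmetric state. If for some bipartition S|S̄ the partial transpose ρ^{T_S} is not supported on ℂ^{|S|+1} ⊗ ℂ^{N−|S|+1} (i.e., one of its marginals has a nontrivial kernel), then rank(ρ) ≤ N. -/
/-!
Let `φ` be a kernel vector of a marginal of `ρ^{T_S}` lying in the symmetric subspace of the
marginal's sites; it exists because that marginal's rank is below `|S| + 1` (resp. `N - |S| + 1`),
the dimension of this symmetric subspace. Positivity of `ρ^{T_S}` (resp. of `ρ`, for the marginal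
on `S̄`, which is unaffected by the transpose) forces `ρ^{T_S} (|z⟩ ⊗ φ) = 0` for every basis
string `z` of the traced-out sites; undoing the partial transpose puts `|0…0⟩ ⊗ φ` in the left
kernel of `ρ`. This vector pairs nontrivially with a Dicke vector, so the range of `ρ`, contained
in the `(N + 1)`-dimensional symmetric subspace, misses a direction of it: `rank ρ ≤ N`.
-/

open scoped ComplexOrder

abbrev QIdx (N : ℕ) := Fin N → Fin 2

def SymmVec {N : ℕ} (ψ : QIdx N → ℂ) : Prop :=
  ∀ σ : Equiv.Perm (Fin N), ∀ f : QIdx N, ψ (f ∘ σ) = ψ f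

def SuppSymm {N : ℕ} (ρ : Matrix (QIdx N) (QIdx N) ℂ) : Prop :=
  ∀ v, SymmVec (ρ.mulVec v)

def ptTrans {N : ℕ} (S : Finset (Fin N)) (ρ : Matrix (QIdx N) (QIdx N) ℂ) :
    Matrix (QIdx N) (QIdx N) ℂ :=
  Matrix.of fun f g =>
    ρ (fun i => if i ∈ S then g i else f i) (fun i => if i ∈ S then f i else g i)

noncomputable def ptrace {N : ℕ} (S : Finset (Fin N)) (ρ : Matrix (QIdx N) (QIdx N) ℂ) :
    Matrix ({i : Fin N // i ∉ S} → Fin 2) ({i : Fin N // i ∉ S} → Fin 2) ℂ :=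
  Matrix.of fun x y => ∑ z : ({i : Fin N // i ∈ S} → Fin 2),
    ρ (fun i => if h : i ∈ S then z ⟨i, h⟩ else x ⟨i, h⟩)
      (fun i => if h : i ∈ S then z ⟨i, h⟩ else y ⟨i, h⟩)

open Matrix Finset

section SymmetricSubspace

variable {K ι : Type*} [Field K]

variable (K ι) in
def symmetricSubspace : Submodule K ((ι → Fin 2) → K) where
  carrier := {ψ | ∀ (σ : Equiv.Perm ι) f, ψ (f ∘ σ) = ψ f}
  add_mem' ha hb σ f := by simp only [Pi.add_apply, ha σ f, hb σ f]
  zero_mem' _ _ := rfl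
  smul_mem' _ _ ha σ f := by simp only [Pi.smul_apply, ha σ f]

variable [Fintype ι]

def weight (f : ι → Fin 2) : ℕ := ∑ i, (f i : ℕ)

lemma weight_comp_perm (f : ι → Fin 2) (σ : Equiv.Perm ι) : weight (f ∘ σ) = weight f :=
  Equiv.sum_comp σ fun i => (f i : ℕ)

lemma card_eq_one_eq_weight (f : ι → Fin 2) : Fintype.card {i // f i = 1} = weight f := by
  rw [Fintype.card_subtype, card_filter, weight]
  refine sum_congr rfl fun i _ => ?_
  generalize f i = c
  fin_cases c <;> rfl

lemma weight_le_card (f : ι → Fin 2) : weight f ≤ Fintype.card ι :=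
  card_eq_one_eq_weight f ▸ Fintype.card_subtype_le _

lemma exists_perm_comp_eq_of_weight_eq {f g : ι → Fin 2} (h : weight f = weight g) :
    ∃ σ : Equiv.Perm ι, g ∘ σ = f := by
  have hfiber : ∀ c, Fintype.card {i // f i = c} = Fintype.card {i // g i = c} := by
    have hone : Fintype.card {i // f i = 1} = Fintype.card {i // g i = 1} := by
      rw [card_eq_one_eq_weight, card_eq_one_eq_weight, h]
    have hzero : ∀ φ : ι → Fin 2, {i // φ i = 0} ≃ {i // ¬φ i = 1} :=
      fun φ => Equiv.subtypeEquivRight fun i => by generalize φ i = c; fin_cases c <;> decide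
    refine Fin.forall_fin_two.mpr ⟨?_, hone⟩
    rw [Fintype.card_congr (hzero f), Fintype.card_congr (hzero g),
      Fintype.card_subtype_compl, Fintype.card_subtype_compl, hone]
  exact ⟨Equiv.ofFiberEquiv fun c => Fintype.equivOfCardEq (hfiber c),
    funext (Equiv.ofFiberEquiv_map _)⟩

noncomputable def stringOfWeight (k : ℕ) : ι → Fin 2 :=
  fun i => if (Fintype.equivFin ι i : ℕ) < k then 1 else 0

lemma weight_stringOfWeight {k : ℕ} (hk : k ≤ Fintype.card ι) :
    weight (stringOfWeight (ι := ι) k) = k := by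
  rw [← card_eq_one_eq_weight]
  refine (Fintype.card_congr ((Fintype.equivFin ι).subtypeEquiv fun i => ?_)).trans
    (Fintype.card_fin_lt_of_le hk)
  by_cases h : (Fintype.equivFin ι i : ℕ) < k <;> simp [stringOfWeight, h]

lemma apply_eq_of_weight_eq {ψ : (ι → Fin 2) → K} (hψ : ψ ∈ symmetricSubspace K ι)
    {f g : ι → Fin 2} (h : weight f = weight g) : ψ f = ψ g := by
  obtain ⟨σ, rfl⟩ := exists_perm_comp_eq_of_weight_eq h
  exact hψ σ g

variable (K) in
def dicke (k : ℕ) : (ι → Fin 2) → K := fun f => if weight f = k then 1 else 0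

lemma dicke_mem_symmetricSubspace (k : ℕ) : dicke K (ι := ι) k ∈ symmetricSubspace K ι :=
  fun σ f => by simp only [dicke, weight_comp_perm]

variable (K ι) in
noncomputable def symmetricSubspaceEquiv :
    symmetricSubspace K ι ≃ₗ[K] (Fin (Fintype.card ι + 1) → K) where
  toFun ψ k := (ψ : (ι → Fin 2) → K) (stringOfWeight k)
  map_add' _ _ := rfl
  map_smul' _ _ := rfl
  invFun c := ⟨∑ k, c k • dicke K k,
    Submodule.sum_mem _ fun k _ => Submodule.smul_mem _ _ (dicke_mem_symmetricSubspace k)⟩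
  left_inv ψ := by
    ext f
    simp only [Finset.sum_apply, Pi.smul_apply, dicke, smul_eq_mul, mul_ite, mul_one, mul_zero]
    rw [sum_eq_single_of_mem ⟨weight f, Nat.lt_succ_of_le (weight_le_card f)⟩ (mem_univ _)
      fun c _ hc => if_neg fun h => hc (Fin.ext h.symm), if_pos rfl]
    exact apply_eq_of_weight_eq ψ.2 (weight_stringOfWeight (weight_le_card f))
  right_inv c := by
    ext k
    simp only [Finset.sum_apply, Pi.smul_apply, dicke, smul_eq_mul, mul_ite, mul_one, mul_zero,
      weight_stringOfWeight (Nat.le_of_lt_succ k.2), Fin.val_inj, sum_ite_eq, mem_univ, if_true]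

lemma finrank_symmetricSubspace :
    Module.finrank K (symmetricSubspace K ι) = Fintype.card ι + 1 := by
  simp [(symmetricSubspaceEquiv K ι).finrank_eq]

variable [DecidableEq ι]

lemma dotProduct_dicke_weight {φ : (ι → Fin 2) → K}
    (hφ : φ ∈ symmetricSubspace K ι) (a : ι → Fin 2) :
    φ ⬝ᵥ dicke K (weight a) = Fintype.card {x : ι → Fin 2 // weight x = weight a} • φ a := by
  simp only [dotProduct, dicke, mul_ite, mul_one, mul_zero, ← sum_filter]
  rw [sum_congr rfl fun x hx => apply_eq_of_weight_eq hφ (mem_filter.mp hx).2, sum_const,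
    Fintype.card_subtype]

lemma exists_mem_symmetricSubspace_mulVec_eq_zero
    (B : Matrix (ι → Fin 2) (ι → Fin 2) K) (hB : B.rank < Fintype.card ι + 1) :
    ∃ φ ∈ symmetricSubspace K ι, φ ≠ 0 ∧ B *ᵥ φ = 0 := by
  by_contra! h
  have hinj : Function.Injective (B.mulVecLin.domRestrict (symmetricSubspace K ι)) := by
    rw [← LinearMap.ker_eq_bot, Submodule.eq_bot_iff]
    exact fun φ hφ => by_contra fun hφ0 => h φ φ.2 (by simpa using hφ0) hφ
  have := (LinearMap.finrank_range_of_inj hinj).symm.trans_le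
    (Submodule.finrank_mono (LinearMap.range_domRestrict_le_range _ _))
  rw [finrank_symmetricSubspace] at this
  exact hB.not_ge this

lemma rank_le_card_of_vecMul_eq_zero (ρ : Matrix (ι → Fin 2) (ι → Fin 2) K)
    (hρ : LinearMap.range ρ.mulVecLin ≤ symmetricSubspace K ι) {u : (ι → Fin 2) → K}
    (hu : u ᵥ* ρ = 0) {v : (ι → Fin 2) → K} (hv : v ∈ symmetricSubspace K ι)
    (huv : u ⬝ᵥ v ≠ 0) : ρ.rank ≤ Fintype.card ι := by
  set V := symmetricSubspace K ι ⊓ LinearMap.ker (dotProductBilin K K u)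
  have hrange : LinearMap.range ρ.mulVecLin ≤ V := by
    rintro _ ⟨w, rfl⟩
    refine ⟨hρ ⟨w, rfl⟩, ?_⟩
    simp [dotProduct_mulVec, hu]
  have hV : V < symmetricSubspace K ι :=
    inf_le_left.lt_of_ne fun h => huv (h ▸ hv).2
  have := (Submodule.finrank_mono hrange).trans_lt (Submodule.finrank_lt_finrank_of_lt hV)
  rw [finrank_symmetricSubspace] at this
  exact Nat.le_of_lt_succ this

end SymmetricSubspace

section Bipartition

variable {K ι : Type*} [Field K] [DecidableEq ι]

abbrev splitSites (T : Finset ι) :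
    (ι → Fin 2) ≃ ({i // i ∈ T} → Fin 2) × ({i // i ∉ T} → Fin 2) :=
  Equiv.piEquivPiSubtypeProd (· ∈ T) fun _ => Fin 2

/-- The product vector `|z⟩ ⊗ φ`, with the basis string `z` on the sites in `T`. -/
def productVec (T : Finset ι) (z : {i // i ∈ T} → Fin 2)
    (φ : ({i // i ∉ T} → Fin 2) → K) : (ι → Fin 2) → K :=
  fun f => if (splitSites T f).1 = z then φ (splitSites T f).2 else 0

variable (T : Finset ι) (z : {i // i ∈ T} → Fin 2) (φ : ({i // i ∉ T} → Fin 2) → K)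

@[simp]
lemma productVec_splitSites_symm (z' : {i // i ∈ T} → Fin 2) (x : {i // i ∉ T} → Fin 2) :
    productVec T z φ ((splitSites T).symm (z', x)) = if z' = z then φ x else 0 := by
  simp [productVec]

lemma star_productVec [StarRing K] : star (productVec T z φ) = productVec T z (star φ) := by
  ext f
  simp [productVec, apply_ite star]

variable [Fintype ι]

lemma sum_splitSites {M : Type*} [AddCommMonoid M] (F : (ι → Fin 2) → M) :
    ∑ f, F f = ∑ z, ∑ x, F ((splitSites T).symm (z, x)) := by
  rw [← (splitSites T).symm.sum_comp, Fintype.sum_prod_type]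

lemma weight_splitSites_symm_zero (x : {i // i ∉ T} → Fin 2) :
    weight ((splitSites T).symm (0, x)) = weight x := by
  rw [weight, ← Fintype.sum_subtype_add_sum_subtype (· ∈ T)]
  simp only [Equiv.piEquivPiSubtypeProd_symm_apply]
  rw [sum_eq_zero fun i _ => by rw [dif_pos i.2]; rfl, zero_add]
  exact sum_congr rfl fun i _ => by rw [dif_neg i.2]

lemma productVec_dotProduct (w : (ι → Fin 2) → K) :
    productVec T z φ ⬝ᵥ w = ∑ x, φ x * w ((splitSites T).symm (z, x)) := by
  simp [dotProduct, sum_splitSites T, ite_mul]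

lemma dotProduct_productVec (w : (ι → Fin 2) → K) :
    w ⬝ᵥ productVec T z φ = ∑ x, w ((splitSites T).symm (z, x)) * φ x := by
  simp [dotProduct_comm w, productVec_dotProduct, mul_comm]

lemma productVec_zero_dotProduct_dicke (k : ℕ) :
    productVec T 0 φ ⬝ᵥ dicke K k = φ ⬝ᵥ dicke K k := by
  rw [productVec_dotProduct]
  simp only [dicke, weight_splitSites_symm_zero]
  rfl

lemma rank_le_card_of_productVec_vecMul_eq_zero [CharZero K]
    (ρ : Matrix (ι → Fin 2) (ι → Fin 2) K)
    (hρ : LinearMap.range ρ.mulVecLin ≤ symmetricSubspace K ι)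
    (hφ : φ ∈ symmetricSubspace K {i // i ∉ T}) (hφ0 : φ ≠ 0)
    (h : productVec T 0 φ ᵥ* ρ = 0) : ρ.rank ≤ Fintype.card ι := by
  obtain ⟨a, ha⟩ := Function.ne_iff.mp hφ0
  refine rank_le_card_of_vecMul_eq_zero ρ hρ h (dicke_mem_symmetricSubspace (weight a)) ?_
  rw [productVec_zero_dotProduct_dicke, dotProduct_dicke_weight hφ]
  exact smul_ne_zero (Fintype.card_pos_iff.mpr ⟨⟨a, rfl⟩⟩).ne' ha

end Bipartition

section PartialTrace

variable {N : ℕ}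

lemma ptrace_apply (T : Finset (Fin N)) (τ : Matrix (QIdx N) (QIdx N) ℂ)
    (x y : {i // i ∉ T} → Fin 2) :
    ptrace T τ x y = ∑ z, τ ((splitSites T).symm (z, x)) ((splitSites T).symm (z, y)) := rfl

lemma star_dotProduct_ptrace_mulVec (T : Finset (Fin N)) (τ : Matrix (QIdx N) (QIdx N) ℂ)
    (φ : ({i // i ∉ T} → Fin 2) → ℂ) :
    star φ ⬝ᵥ (ptrace T τ *ᵥ φ) =
      ∑ z, star (productVec T z φ) ⬝ᵥ (τ *ᵥ productVec T z φ) := by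
  simp only [star_productVec, productVec_dotProduct, mulVec, dotProduct_productVec]
  simp only [dotProduct, mulVec, ptrace_apply, Pi.star_apply, sum_mul, mul_sum]
  exact (sum_congr rfl fun x _ => sum_comm).trans sum_comm

lemma mulVec_productVec_eq_zero_of_ptrace_mulVec_eq_zero {T : Finset (Fin N)}
    {τ : Matrix (QIdx N) (QIdx N) ℂ} (hτ : τ.PosSemidef) {φ : ({i // i ∉ T} → Fin 2) → ℂ}
    (hφ : ptrace T τ *ᵥ φ = 0) (z : {i // i ∈ T} → Fin 2) : τ *ᵥ productVec T z φ = 0 := by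
  have hsum : ∑ z, star (productVec T z φ) ⬝ᵥ (τ *ᵥ productVec T z φ) = 0 := by
    rw [← star_dotProduct_ptrace_mulVec, hφ, dotProduct_zero]
  rw [← hτ.dotProduct_mulVec_zero_iff]
  exact (sum_eq_zero_iff_of_nonneg fun z _ => hτ.dotProduct_mulVec_nonneg _).mp hsum z (mem_univ z)

lemma vecMul_productVec_eq_zero_of_ptrace_mulVec_eq_zero {T : Finset (Fin N)}
    {ρ : Matrix (QIdx N) (QIdx N) ℂ} (hρ : ρ.PosSemidef) {φ : ({i // i ∉ T} → Fin 2) → ℂ}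
    (hφ : ptrace T ρ *ᵥ φ = 0) : productVec T 0 (star φ) ᵥ* ρ = 0 :=
  calc productVec T 0 (star φ) ᵥ* ρ = star (productVec T 0 φ) ᵥ* ρᴴ := by
        rw [star_productVec, hρ.isHermitian.eq]
    _ = star (ρ *ᵥ productVec T 0 φ) := (star_mulVec _ _).symm
    _ = 0 := by rw [mulVec_productVec_eq_zero_of_ptrace_mulVec_eq_zero hρ hφ, star_zero]

lemma ptrace_ptTrans (S : Finset (Fin N)) (ρ : Matrix (QIdx N) (QIdx N) ℂ) :
    ptrace S (ptTrans S ρ) = ptrace S ρ := by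
  ext x y
  refine sum_congr rfl fun z _ => ?_
  show ρ _ _ = ρ _ _
  congr 1 <;> funext i <;> by_cases hi : i ∈ S <;> simp [hi]

/-- `ptTrans S` swaps the `S`-parts of row and column index: `x` moves into the column and the
summed `S`-part of the vector into the row. -/
lemma ptTrans_mulVec_productVec (S : Finset (Fin N)) (ρ : Matrix (QIdx N) (QIdx N) ℂ)
    (z w : {i // i ∈ Sᶜ} → Fin 2) (x : {i // i ∉ Sᶜ} → Fin 2)
    (φ : ({i // i ∉ Sᶜ} → Fin 2) → ℂ) :
    (ptTrans S ρ *ᵥ productVec Sᶜ z φ) ((splitSites Sᶜ).symm (w, x)) =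
      (productVec Sᶜ w φ ᵥ* ρ) ((splitSites Sᶜ).symm (z, x)) := by
  simp only [mulVec, vecMul, dotProduct_productVec, productVec_dotProduct]
  refine sum_congr rfl fun b _ => ?_
  rw [mul_comm]
  congr 1
  show ρ _ _ = ρ _ _
  congr 1 <;> funext i <;> by_cases hi : i ∈ S <;> simp [hi]

lemma vecMul_productVec_eq_zero_of_ptrace_ptTrans_mulVec_eq_zero {S : Finset (Fin N)}
    {ρ : Matrix (QIdx N) (QIdx N) ℂ} (hρ : (ptTrans S ρ).PosSemidef)
    {φ : ({i // i ∉ Sᶜ} → Fin 2) → ℂ} (hφ : ptrace Sᶜ (ptTrans S ρ) *ᵥ φ = 0) :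
    productVec Sᶜ 0 φ ᵥ* ρ = 0 := by
  ext d
  obtain ⟨⟨z, x⟩, rfl⟩ := (splitSites Sᶜ).symm.surjective d
  rw [← ptTrans_mulVec_productVec,
    mulVec_productVec_eq_zero_of_ptrace_mulVec_eq_zero hρ hφ z]
  rfl

end PartialTrace

/-- for an `N`-qubit PPT symmetric state `ρ`, if for some bipartition
`S|S̄` the partial transpose `ρ^{T_S}` is not supported on `ℂ^{|S|+1} ⊗ ℂ^{N-|S|+1}`,
i.e. one of its marginals has a nontrivial kernel (rank below the dimension of the
corresponding symmetric subspace), then `rank ρ ≤ N`. -/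
theorem stmt10 (N : ℕ) (ρ : Matrix (QIdx N) (QIdx N) ℂ)
    (hPSD : ρ.PosSemidef) (hsupp : SuppSymm ρ)
    (hPPT : ∀ S : Finset (Fin N), (ptTrans S ρ).PosSemidef)
    (S : Finset (Fin N))
    (hker : (ptrace Sᶜ (ptTrans S ρ)).rank < S.card + 1 ∨
            (ptrace S (ptTrans S ρ)).rank < N - S.card + 1) :
    ρ.rank ≤ N := by
  have hrange : LinearMap.range ρ.mulVecLin ≤ symmetricSubspace ℂ (Fin N) := by
    rintro _ ⟨v, rfl⟩
    exact hsupp v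
  rcases hker with hS | hSc
  · have hcard : Fintype.card {i // i ∉ Sᶜ} = S.card := by simp
    obtain ⟨φ, hφ, hφ0, hφker⟩ := exists_mem_symmetricSubspace_mulVec_eq_zero _ (hcard ▸ hS)
    simpa using rank_le_card_of_productVec_vecMul_eq_zero Sᶜ φ ρ hrange hφ hφ0
      (vecMul_productVec_eq_zero_of_ptrace_ptTrans_mulVec_eq_zero (hPPT S) hφker)
  · have hcard : Fintype.card {i // i ∉ S} = N - S.card := by simp
    rw [ptrace_ptTrans] at hSc
    obtain ⟨φ, hφ, hφ0, hφker⟩ := exists_mem_symmetricSubspace_mulVec_eq_zero _ (hcard ▸ hSc)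
    simpa using rank_le_card_of_productVec_vecMul_eq_zero S (star φ) ρ hrange
      (fun σ f => congrArg star (hφ σ f)) (star_ne_zero.mpr hφ0)
      (vecMul_productVec_eq_zero_of_ptrace_mulVec_eq_zero hPSD hφker)
end

section
/- If |e⟩ ∈ ℂ², |ψ⟩ is a vector on qubits S̄ ∪ S, and P_{A∪S}(|e⟩_A ⊗ |ψ⟩) = |e⟩_A ⊗ |ψ⟩ where P_{A∪S} projects onto the symmetric subspace of qubit A together with the qubits in S, then |ψ⟩ = |ψ̃⟩_{S̄} ⊗ |e⟩^⊗|S| for some vector |ψ̃⟩ on the qubits in S̄. -/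
open scoped Classical

def tens {a b : ℕ} (ψ : QIdx a → ℂ) (φ : QIdx b → ℂ) : QIdx (a + b) → ℂ :=
  fun f => ψ (fun i => f (Fin.castAdd b i)) * φ (fun j => f (Fin.natAdd a j))

def oneQ (e : Fin 2 → ℂ) : QIdx 1 → ℂ := fun f => e (f 0)

def prodVec {N : ℕ} (e : Fin N → (Fin 2 → ℂ)) : QIdx N → ℂ :=
  fun f => ∏ i, e i (f i)

def permMat {N : ℕ} (σ : Equiv.Perm (Fin N)) : Matrix (QIdx N) (QIdx N) ℂ :=
  Matrix.of fun f g => if g = f ∘ σ then 1 else 0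

noncomputable def symSubsetProj {N : ℕ} (T : Finset (Fin N)) :
    Matrix (QIdx N) (QIdx N) ℂ :=
  ((T.card.factorial : ℂ)⁻¹) •
    ∑ σ : Equiv.Perm (Fin N), if (∀ i ∉ T, σ i = i) then permMat σ else 0

def AunionS (t s : ℕ) : Finset (Fin (1 + (t + s))) :=
  Finset.univ.filter fun i => (i : ℕ) = 0 ∨ 1 + t ≤ (i : ℕ)

/-!
Invariance of `|e⟩_A ⊗ ψ` under the transposition of `A` with a qubit `j` of `S` is the exchange
relation `e (g j) * ψ (g[j ↦ a]) = e a * ψ g`. Fixing `k` with `e k ≠ 0` and exchanging every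
qubit of `S` in turn against `k` gives
`e k ^ |S| * ψ g = ψ (g with all of S set to k) * ∏ j ∈ S, e (g j)`,
which is the product form `ψ = ψ̃ ⊗ e^⊗|S|`.
-/

section SymmetricProjector

variable {N : ℕ}

theorem permMat_mulVec_apply (σ : Equiv.Perm (Fin N)) (v : QIdx N → ℂ) (f : QIdx N) :
    (permMat σ).mulVec v f = v (f ∘ σ) := by
  simp [permMat, Matrix.mulVec, dotProduct]

theorem symSubsetProj_mulVec_apply (T : Finset (Fin N)) (v : QIdx N → ℂ) (f : QIdx N) :
    (symSubsetProj T).mulVec v f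
      = (T.card.factorial : ℂ)⁻¹ *
        ∑ σ : Equiv.Perm (Fin N), if ∀ i ∉ T, σ i = i then v (f ∘ σ) else 0 := by
  simp only [symSubsetProj, Matrix.smul_mulVec, Matrix.sum_mulVec, Pi.smul_apply,
    Finset.sum_apply, smul_eq_mul]
  congr 1
  refine Finset.sum_congr rfl fun σ _ => ?_
  split_ifs <;> simp [permMat_mulVec_apply]

theorem symSubsetProj_mulVec_comp_perm (T : Finset (Fin N)) (v : QIdx N → ℂ)
    {σ : Equiv.Perm (Fin N)} (hσ : ∀ i ∉ T, σ i = i) (f : QIdx N) :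
    (symSubsetProj T).mulVec v (f ∘ σ) = (symSubsetProj T).mulVec v f := by
  rw [symSubsetProj_mulVec_apply, symSubsetProj_mulVec_apply]
  congr 1
  refine Fintype.sum_equiv (Equiv.mulLeft σ) _ _ fun τ => ?_
  have hfix : (∀ i ∉ T, (σ * τ) i = i) ↔ ∀ i ∉ T, τ i = i :=
    forall₂_congr fun i hi => by
      rw [Equiv.Perm.mul_apply, ← hσ i hi, σ.injective.eq_iff, hσ i hi]
  exact if_congr hfix.symm rfl rfl

theorem comp_perm_eq_of_symSubsetProj_mulVec_eq {T : Finset (Fin N)} {v : QIdx N → ℂ}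
    (hv : (symSubsetProj T).mulVec v = v) {σ : Equiv.Perm (Fin N)}
    (hσ : ∀ i ∉ T, σ i = i) (f : QIdx N) :
    v (f ∘ σ) = v f := by
  rw [← hv, symSubsetProj_mulVec_comp_perm T v hσ]

theorem comp_swap_eq_of_symSubsetProj_mulVec_eq {T : Finset (Fin N)} {v : QIdx N → ℂ}
    (hv : (symSubsetProj T).mulVec v = v) {i j : Fin N} (hi : i ∈ T) (hj : j ∈ T)
    (f : QIdx N) :
    v (f ∘ Equiv.swap i j) = v f :=
  comp_perm_eq_of_symSubsetProj_mulVec_eq hv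
    (fun _ hk => Equiv.swap_apply_of_ne_of_ne (by rintro rfl; exact hk hi)
      (by rintro rfl; exact hk hj)) f

end SymmetricProjector

theorem mul_pow_card_eq_piecewise_mul_prod {ι α R : Type*} [DecidableEq ι] [CommMonoid R]
    (ψ : (ι → α) → R) (e : α → R) (k : α) (J : Finset ι)
    (hψ : ∀ j ∈ J, ∀ g, e (g j) * ψ (Function.update g j k) = e k * ψ g) (g : ι → α) :
    e k ^ J.card * ψ g = ψ (J.piecewise (fun _ => k) g) * ∏ j ∈ J, e (g j) := by
  induction J using Finset.induction_on with
  | empty => simp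
  | insert j J hj ih =>
    have hgj : J.piecewise (fun _ => k) g j = g j := J.piecewise_eq_of_notMem _ _ hj
    have hstep := hψ j (J.mem_insert_self j) (J.piecewise (fun _ => k) g)
    rw [hgj, ← Finset.piecewise_insert] at hstep
    rw [Finset.card_insert_of_notMem hj, Finset.prod_insert hj, pow_succ', mul_assoc,
      ih fun i hi => hψ i (Finset.mem_insert_of_mem hi), ← mul_assoc, ← hstep]
    ac_rfl

theorem tens_oneQ_append {n : ℕ} (e : Fin 2 → ℂ) (ψ : QIdx n → ℂ) (a : Fin 2) (g : QIdx n) :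
    tens (oneQ e) ψ (Fin.append (fun _ : Fin 1 => a) g) = e a * ψ g := by
  simp [tens, oneQ, Fin.append_left, Fin.append_right]

theorem append_comp_swap {n : ℕ} (a : Fin 2) (g : QIdx n) (j : Fin n) :
    Fin.append (fun _ : Fin 1 => a) g ∘ Equiv.swap (Fin.castAdd n 0) (Fin.natAdd 1 j)
      = Fin.append (fun _ : Fin 1 => g j) (Function.update g j a) := by
  funext i
  refine Fin.addCases (fun i₀ => ?_) (fun i' => ?_) i
  · rw [Subsingleton.elim i₀ 0]
    simp [Fin.append_left, Fin.append_right]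
  · by_cases hi' : i' = j
    · subst hi'
      simp [Fin.append_left, Fin.append_right]
    · have h0 : Fin.natAdd 1 i' ≠ Fin.castAdd n 0 := by simp [Fin.ext_iff]
      rw [Function.comp_apply, Equiv.swap_apply_of_ne_of_ne h0 ((Fin.natAdd_inj 1).not.mpr hi')]
      simp [Fin.append_right, hi']

theorem exchange_of_symSubsetProj_fixed (t s : ℕ) (e : Fin 2 → ℂ) (ψ : QIdx (t + s) → ℂ)
    (hfix : (symSubsetProj (AunionS t s)).mulVec (tens (oneQ e) ψ) = tens (oneQ e) ψ)
    (j : Fin s) (g : QIdx (t + s)) (a : Fin 2) :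
    e (g (Fin.natAdd t j)) * ψ (Function.update g (Fin.natAdd t j) a) = e a * ψ g := by
  have hA : Fin.castAdd (t + s) (0 : Fin 1) ∈ AunionS t s := by
    simp only [AunionS, Finset.mem_filter, Finset.mem_univ, Fin.val_castAdd, true_and]
    exact Or.inl rfl
  have hS : Fin.natAdd 1 (Fin.natAdd t j) ∈ AunionS t s := by simp [AunionS]
  have h := comp_swap_eq_of_symSubsetProj_mulVec_eq hfix hA hS (Fin.append (fun _ => a) g)
  rwa [append_comp_swap, tens_oneQ_append, tens_oneQ_append] at h

theorem piecewise_map_natAddEmb {α : Type*} {t s : ℕ} (k : α) (g : Fin (t + s) → α) :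
    (Finset.univ.map (Fin.natAddEmb t (m := s))).piecewise (fun _ => k) g
      = Fin.append (fun i => g (Fin.castAdd s i)) fun _ => k := by
  funext i
  refine Fin.addCases (fun i' => ?_) (fun j => ?_) i
  · rw [Fin.append_left, Finset.piecewise_eq_of_notMem]
    simp only [Finset.mem_map, Finset.mem_univ, true_and, Fin.natAddEmb_apply, Fin.ext_iff,
      Fin.val_natAdd, Fin.val_castAdd, not_exists]
    omega
  · rw [Fin.append_right, Finset.piecewise_eq_of_mem]
    simp

/-- if `P_{A∪S}(|e⟩_A ⊗ |ψ⟩) = |e⟩_A ⊗ |ψ⟩`, where `P_{A∪S}` projects onto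
the symmetric subspace of qubit `A` together with the `s` qubits of `S` (and `|ψ⟩` lives
on `S̄ ∪ S`, with `S̄` the middle `t` qubits), then `|ψ⟩ = |ψ̃⟩_{S̄} ⊗ |e⟩^⊗s`. -/
theorem stmt12 (t s : ℕ) (e : Fin 2 → ℂ) (he : e ≠ 0) (ψ : QIdx (t + s) → ℂ)
    (hfix : (symSubsetProj (AunionS t s)).mulVec (tens (oneQ e) ψ)
        = tens (oneQ e) ψ) :
    ∃ ψt : QIdx t → ℂ, ψ = tens ψt (prodVec fun _ : Fin s => e) := by
  obtain ⟨k, hk⟩ : ∃ k, e k ≠ 0 := Function.ne_iff.mp he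
  refine ⟨fun gt => (e k ^ s)⁻¹ * ψ (Fin.append gt fun _ => k), funext fun g => ?_⟩
  have hg := mul_pow_card_eq_piecewise_mul_prod ψ e k
    (Finset.univ.map (Fin.natAddEmb t)) (by
      simp only [Finset.mem_map, Finset.mem_univ, true_and, Fin.natAddEmb_apply]
      rintro _ ⟨j, rfl⟩ g'
      exact exchange_of_symSubsetProj_fixed t s e ψ hfix j g' k) g
  rw [piecewise_map_natAddEmb, Finset.card_map, Finset.card_univ, Fintype.card_fin,
    Finset.prod_map] at hg
  simp only [tens, prodVec, Fin.natAddEmb_apply] at hg ⊢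
  rw [mul_assoc, ← hg, inv_mul_cancel_left₀ (pow_ne_zero s hk)]
end
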